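/- Let Q be a finite quiver, d a dimension vector with all d_i ≥ 1, and ρ a nonzero linear combination of paths from vertex i to vertex j in the path algebra kQ. Then there exists a representation W ∈ rep_Q(d) such that the matrix W_ρ ≠ 0. Concretely, if ω₀ is a path appearing in ρ with nonzero coefficient λ, define W_α to be the matrix with (1,1)-entry 1 and all other entries 0 whenever α appears in ω₀ and W_α = 0 otherwise; if no two distinct paths in ρ use exactly the arrows appearing in ω₀ with the same multiplicities in a way producing the same matrix product, then the (1,1)-entry of W_ρ is λ. -/
import Mathlib


/-- Evaluation of a matrix representation on a path (product of the arrow matrices). -/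
def pathMatrix {k : Type*} [Field k] {Q : Type*} [Quiver Q] {d : Q → ℕ}
    (W : ∀ {i j : Q}, (i ⟶ j) → Matrix (Fin (d j)) (Fin (d i)) k) :
    ∀ {i j : Q}, Quiver.Path i j → Matrix (Fin (d j)) (Fin (d i)) k
  | _, _, Quiver.Path.nil => 1
  | _, _, Quiver.Path.cons p a => (W a) * (pathMatrix W p)

/-- The list of arrows appearing in a path. -/
def arrowsOf {Q : Type*} [Quiver Q] : ∀ {i j : Q}, Quiver.Path i j → List (Σ a b : Q, a ⟶ b)
  | _, _, Quiver.Path.nil => []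
  | _, _, Quiver.Path.cons p e => ⟨_, _, e⟩ :: arrowsOf p

/-- The representation assigning to each arrow of the path `ω₀` the matrix with
`(1,1)`-entry `1` and all other entries `0`, and the zero matrix to all other arrows. -/
def concreteRep {k : Type*} [Field k] {Q : Type*} [Quiver Q] [DecidableEq Q]
    [∀ a b : Q, DecidableEq (a ⟶ b)] (d : Q → ℕ) {i j : Q} (ω₀ : Quiver.Path i j) :
    ∀ {a b : Q}, (a ⟶ b) → Matrix (Fin (d b)) (Fin (d a)) k :=
  fun {a b} e =>
    if (⟨a, b, e⟩ : Σ a b : Q, a ⟶ b) ∈ arrowsOf ω₀ then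
      (fun p q => if (p : ℕ) = 0 ∧ (q : ℕ) = 0 then 1 else 0)
    else 0

lemma pathMatrix_entry_one {k : Type*} [Field k] {Q : Type*} [Quiver Q] [DecidableEq Q]
    [∀ a b : Q, DecidableEq (a ⟶ b)] (d : Q → ℕ) (hd : ∀ i, 1 ≤ d i)
    {i j : Q} (ω₀ : Quiver.Path i j) :
    ∀ {a b : Q} (ω : Quiver.Path a b), (∀ e ∈ arrowsOf ω, e ∈ arrowsOf ω₀) →
      pathMatrix (concreteRep (k := k) d ω₀) ω ⟨0, hd b⟩ ⟨0, hd a⟩ = 1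
  | _, _, Quiver.Path.nil, _ => by
      simp [pathMatrix, Matrix.one_apply]
  | a, b, Quiver.Path.cons p e, h => by
      have he : (⟨_, _, e⟩ : Σ a b : Q, a ⟶ b) ∈ arrowsOf ω₀ := h _ (by simp [arrowsOf])
      have hp : ∀ e' ∈ arrowsOf p, e' ∈ arrowsOf ω₀ := fun e' he' => h e' (by simp [arrowsOf, he'])
      have ih := pathMatrix_entry_one (k := k) d hd ω₀ p hp
      rw [pathMatrix, Matrix.mul_apply]
      rw [Finset.sum_eq_single (⟨0, hd _⟩ : Fin (d _))]
      · simp [concreteRep, he, ih]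
      · intro r _ hr
        have : (r : ℕ) ≠ 0 := fun h0 => hr (Fin.ext h0)
        simp [concreteRep, he, this]
      · simp

lemma pathMatrix_zero {k : Type*} [Field k] {Q : Type*} [Quiver Q] [DecidableEq Q]
    [∀ a b : Q, DecidableEq (a ⟶ b)] (d : Q → ℕ)
    {i j : Q} (ω₀ : Quiver.Path i j) :
    ∀ {a b : Q} (ω : Quiver.Path a b), (¬ ∀ e ∈ arrowsOf ω, e ∈ arrowsOf ω₀) →
      pathMatrix (concreteRep (k := k) d ω₀) ω = 0
  | _, _, Quiver.Path.nil, h => by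
      exact (h (fun e he => absurd he (by simp [arrowsOf]))).elim
  | a, b, Quiver.Path.cons p e, h => by
      by_cases he : (⟨_, _, e⟩ : Σ a b : Q, a ⟶ b) ∈ arrowsOf ω₀
      · have hp : ¬ ∀ e' ∈ arrowsOf p, e' ∈ arrowsOf ω₀ := by
          intro hp
          exact h (by intro e' he'; rcases (by simpa [arrowsOf] using he') with h1 | h2
                      · subst h1; exact he
                      · exact hp _ h2)
        rw [pathMatrix, pathMatrix_zero (k := k) d ω₀ p hp, Matrix.mul_zero]
      · rw [pathMatrix]
        have : concreteRep (k := k) d ω₀ e = 0 := by simp [concreteRep, he]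
        rw [this, Matrix.zero_mul]

/-- Let `ρ = Σ λ_ω ω` be a nonzero combination of paths from `i` to `j`, `ω₀` a path with
`λ_{ω₀} ≠ 0`, and suppose `ω₀` is the only path appearing in `ρ` all of whose arrows lie
among the arrows of `ω₀`. For the representation `W` with `W_α = E₁₁` for arrows `α` of
`ω₀` and `W_α = 0` otherwise, the `(1,1)`-entry of `W_ρ` equals `λ_{ω₀}`; in particular
`W_ρ ≠ 0`, so some representation in `rep_Q(d)` is not annihilated by `ρ`. -/
theorem stmt9 {k : Type*} [Field k] {Q : Type*} [Quiver Q] [DecidableEq Q]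
    [∀ a b : Q, DecidableEq (a ⟶ b)] (d : Q → ℕ) (hd : ∀ i, 1 ≤ d i)
    {i j : Q} (ρ : Quiver.Path i j →₀ k) (ω₀ : Quiver.Path i j)
    (hω₀ : ρ ω₀ ≠ 0)
    (huniq : ∀ ω ∈ ρ.support, (∀ e ∈ arrowsOf ω, e ∈ arrowsOf ω₀) → ω = ω₀) :
    (ρ.sum fun ω c => c • pathMatrix (concreteRep (k := k) d ω₀) ω) ⟨0, hd j⟩ ⟨0, hd i⟩ = ρ ω₀ ∧
      (ρ.sum fun ω c => c • pathMatrix (concreteRep (k := k) d ω₀) ω) ≠ 0 := by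
  have key : (ρ.sum fun ω c => c • pathMatrix (concreteRep (k := k) d ω₀) ω)
      ⟨0, hd j⟩ ⟨0, hd i⟩ = ρ ω₀ := by
    rw [Finsupp.sum, Matrix.sum_apply]
    simp only [Matrix.smul_apply, smul_eq_mul]
    rw [Finset.sum_eq_single ω₀]
    · rw [pathMatrix_entry_one d hd ω₀ ω₀ (fun e he => he), mul_one]
    · intro ω hω hne
      have : ¬ ∀ e ∈ arrowsOf ω, e ∈ arrowsOf ω₀ := fun hc => hne (huniq ω hω hc)
      rw [pathMatrix_zero d ω₀ ω this]
      simp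
    · intro h
      simp [Finsupp.mem_support_iff, hω₀] at h
  refine ⟨key, fun h0 => ?_⟩
  rw [h0] at key
  exact hω₀ (by simpa using key.symm)
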